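/- arXiv:1404.3808 — 2 statements merged into one kernel-verified Lean document; each statement's English description precedes it below -/
import Mathlib

section
/- Let D be a real m×m matrix such that Φ = I − DᵀD is positive definite, and hence Φ̄ = I − DDᵀ is positive definite. Let Φ^{1/2} and Φ̄^{1/2} denote the positive definite square roots of Φ and Φ̄, and Φ^{-1/2}, Φ̄^{-1/2} their inverses. Then for all vectors ξ̄ ∈ ℝ^m and w ∈ ℝ^m, defining ζ̄ = w + D ξ̄, ξ̌ = Φ^{1/2} ξ̄ − Φ^{-1/2} Dᵀ w, and ζ̌ = Φ̄^{-1/2} w, one has the identity ‖ξ̌‖² − ‖ζ̌‖² = ‖ξ̄‖² − ‖ζ̄‖². Consequently, along any trajectory, the integral quadratic constraint ∫₀^{T₀} (‖ξ̄(t)‖² − ‖ζ̄(t)‖²) dt ≤ c is equivalent to ∫₀^{T₀} (‖ξ̌(t)‖² − ‖ζ̌(t)‖²) dt ≤ c for every horizon T₀ ≥ 0 and constant c. -/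
open Matrix MeasureTheory

/-! With `Φ = P²` and `Φ̄ = Q²`, the push-through identity `Φ̄⁻¹ = 1 + D Φ⁻¹ Dᵀ` makes the term
`‖Φ^{-1/2} Dᵀ w‖²` appear in both `‖ξ̌‖²` and `‖ζ̌‖²`, so it cancels in their difference; what is
left is `‖ξ̄‖² - ‖Dξ̄‖² - 2⟨Dξ̄, w⟩ - ‖w‖² = ‖ξ̄‖² - ‖ζ̄‖²`. The integrands of the two constraints
then agree pointwise. -/

namespace Matrix

variable {m n R : Type*} [Fintype m] [Fintype n] [DecidableEq m] [DecidableEq n] [CommRing R]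

theorem inv_one_sub_mul_eq (A : Matrix m n R) (B : Matrix n m R) (h : IsUnit (1 - B * A).det) :
    (1 - A * B)⁻¹ = 1 + A * (1 - B * A)⁻¹ * B := by
  apply inv_eq_right_inv
  calc (1 - A * B) * (1 + A * (1 - B * A)⁻¹ * B)
      = 1 - A * B + A * ((1 - B * A) * (1 - B * A)⁻¹) * B := by
        simp only [Matrix.sub_mul, Matrix.mul_add, Matrix.mul_sub, Matrix.mul_one, Matrix.one_mul,
          Matrix.mul_assoc]
    _ = 1 := by rw [mul_nonsing_inv _ h, Matrix.mul_one, sub_add_cancel]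

omit [DecidableEq m] [DecidableEq n] in
theorem IsSymm.mulVec_dotProduct_mulVec {S : Matrix n n R} (hS : S.IsSymm) (T : Matrix n m R)
    (x : n → R) (y : m → R) : (S *ᵥ x) ⬝ᵥ (T *ᵥ y) = x ⬝ᵥ ((S * T) *ᵥ y) := by
  rw [← mulVec_mulVec, dotProduct_mulVec x, ← mulVec_transpose, hS.eq]

omit [DecidableEq m] [DecidableEq n] in
theorem sum_sq_eq_dotProduct_self (v : n → R) : ∑ i, v i ^ 2 = v ⬝ᵥ v := by
  simp only [dotProduct, sq]

omit [DecidableEq m] [DecidableEq n] in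
theorem dotProduct_mulVec_eq_transpose_mulVec (A : Matrix m n R) (x : m → R) (y : n → R) :
    x ⬝ᵥ (A *ᵥ y) = (Aᵀ *ᵥ x) ⬝ᵥ y := by
  rw [dotProduct_mulVec, mulVec_transpose]

theorem loopShift_dotProduct_sub_dotProduct {D : Matrix m n R} {P : Matrix n n R}
    {Q : Matrix m m R} (hP : P.IsSymm) (hPdet : IsUnit P.det) (hP2 : P * P = 1 - Dᵀ * D)
    (hQ : Q.IsSymm) (hQ2 : Q * Q = 1 - D * Dᵀ) (ξ : n → R) (w : m → R) :
    (P *ᵥ ξ - P⁻¹ *ᵥ (Dᵀ *ᵥ w)) ⬝ᵥ (P *ᵥ ξ - P⁻¹ *ᵥ (Dᵀ *ᵥ w)) - (Q⁻¹ *ᵥ w) ⬝ᵥ (Q⁻¹ *ᵥ w) =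
      ξ ⬝ᵥ ξ - (w + D *ᵥ ξ) ⬝ᵥ (w + D *ᵥ ξ) := by
  have hΦ : IsUnit (1 - Dᵀ * D).det := by rw [← hP2, det_mul]; exact hPdet.mul hPdet
  have hP2inv : P⁻¹ * P⁻¹ = (1 - Dᵀ * D)⁻¹ := by rw [← hP2, mul_inv_rev]
  have hQ2inv : Q⁻¹ * Q⁻¹ = 1 + D * (1 - Dᵀ * D)⁻¹ * Dᵀ := by
    rw [← mul_inv_rev, hQ2, inv_one_sub_mul_eq D Dᵀ hΦ]
  set u := Dᵀ *ᵥ w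
  have hξξ : (P *ᵥ ξ) ⬝ᵥ (P *ᵥ ξ) = ξ ⬝ᵥ ξ - (D *ᵥ ξ) ⬝ᵥ (D *ᵥ ξ) := by
    rw [hP.mulVec_dotProduct_mulVec, hP2, sub_mulVec, one_mulVec, dotProduct_sub,
      ← mulVec_mulVec, dotProduct_mulVec_eq_transpose_mulVec, transpose_transpose]
  have hξu : (P *ᵥ ξ) ⬝ᵥ (P⁻¹ *ᵥ u) = (D *ᵥ ξ) ⬝ᵥ w := by
    rw [hP.mulVec_dotProduct_mulVec, mul_nonsing_inv _ hPdet, one_mulVec,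
      dotProduct_mulVec_eq_transpose_mulVec, transpose_transpose, dotProduct_comm]
  have huu : (P⁻¹ *ᵥ u) ⬝ᵥ (P⁻¹ *ᵥ u) = u ⬝ᵥ ((1 - Dᵀ * D)⁻¹ *ᵥ u) := by
    rw [hP.inv.mulVec_dotProduct_mulVec, hP2inv]
  have hww : (Q⁻¹ *ᵥ w) ⬝ᵥ (Q⁻¹ *ᵥ w) = w ⬝ᵥ w + u ⬝ᵥ ((1 - Dᵀ * D)⁻¹ *ᵥ u) := by
    rw [hQ.inv.mulVec_dotProduct_mulVec, hQ2inv, add_mulVec, one_mulVec, dotProduct_add,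
      ← mulVec_mulVec, ← mulVec_mulVec, dotProduct_mulVec_eq_transpose_mulVec]
  rw [sub_dotProduct, dotProduct_sub, dotProduct_sub, dotProduct_comm (P⁻¹ *ᵥ u), hξξ, hξu,
    huu, hww, add_dotProduct, dotProduct_add, dotProduct_add, dotProduct_comm w (D *ᵥ ξ)]
  ring

end Matrix

theorem stmt5_general (m : ℕ) (D : Matrix (Fin m) (Fin m) ℝ)
    (P : Matrix (Fin m) (Fin m) ℝ) (hP : P.PosDef) (hP2 : P * P = 1 - Dᵀ * D)
    (Q : Matrix (Fin m) (Fin m) ℝ) (hQ : Q.PosDef) (hQ2 : Q * Q = 1 - D * Dᵀ) :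
    (∀ ξ w : Fin m → ℝ,
      (∑ i, (P *ᵥ ξ - P⁻¹ *ᵥ (Dᵀ *ᵥ w)) i ^ 2) - (∑ i, (Q⁻¹ *ᵥ w) i ^ 2) =
        (∑ i, ξ i ^ 2) - ∑ i, (w + D *ᵥ ξ) i ^ 2) ∧
    (∀ (ξ w : ℝ → Fin m → ℝ) (T₀ : ℝ), 0 ≤ T₀ → ∀ c : ℝ,
      ((∫ t in (0:ℝ)..T₀, ((∑ i, ξ t i ^ 2) - ∑ i, (w t + D *ᵥ ξ t) i ^ 2)) ≤ c ↔
        (∫ t in (0:ℝ)..T₀,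
          ((∑ i, (P *ᵥ ξ t - P⁻¹ *ᵥ (Dᵀ *ᵥ w t)) i ^ 2) -
            ∑ i, (Q⁻¹ *ᵥ w t) i ^ 2)) ≤ c)) := by
  have pointwise : ∀ ξ w : Fin m → ℝ,
      (∑ i, (P *ᵥ ξ - P⁻¹ *ᵥ (Dᵀ *ᵥ w)) i ^ 2) - (∑ i, (Q⁻¹ *ᵥ w) i ^ 2) =
        (∑ i, ξ i ^ 2) - ∑ i, (w + D *ᵥ ξ) i ^ 2 := by
    intro ξ w
    simp only [sum_sq_eq_dotProduct_self]
    exact loopShift_dotProduct_sub_dotProduct (isHermitian_iff_isSymm.mp hP.isHermitian)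
      hP.det_pos.ne'.isUnit hP2 (isHermitian_iff_isSymm.mp hQ.isHermitian) hQ2 ξ w
  exact ⟨pointwise, fun ξ w T₀ _ c => by simp only [pointwise]⟩

/-- Loop shifting preserves the normalized IQC integrand: with
`Φ = I - DᵀD ≻ 0`, `Φ̄ = I - DDᵀ ≻ 0`, positive definite square roots `P = Φ^{1/2}`,
`Q = Φ̄^{1/2}`, and `ζ̄ = w + Dξ̄`, `ξ̌ = Φ^{1/2}ξ̄ - Φ^{-1/2}Dᵀw`, `ζ̌ = Φ̄^{-1/2}w`, one has
`‖ξ̌‖² - ‖ζ̌‖² = ‖ξ̄‖² - ‖ζ̄‖²` pointwise, and hence the two integral quadratic constraints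
are equivalent along any trajectory (norms written as sums of squares). -/
theorem stmt5 (m : ℕ) (D : Matrix (Fin m) (Fin m) ℝ)
    (hΦ : (1 - Dᵀ * D).PosDef) (hΦbar : (1 - D * Dᵀ).PosDef)
    (P : Matrix (Fin m) (Fin m) ℝ) (hP : P.PosDef) (hP2 : P * P = 1 - Dᵀ * D)
    (Q : Matrix (Fin m) (Fin m) ℝ) (hQ : Q.PosDef) (hQ2 : Q * Q = 1 - D * Dᵀ) :
    (∀ ξ w : Fin m → ℝ,
      (∑ i, (P *ᵥ ξ - P⁻¹ *ᵥ (Dᵀ *ᵥ w)) i ^ 2) - (∑ i, (Q⁻¹ *ᵥ w) i ^ 2) =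
        (∑ i, ξ i ^ 2) - ∑ i, (w + D *ᵥ ξ) i ^ 2) ∧
    (∀ (ξ w : ℝ → Fin m → ℝ) (T₀ : ℝ), 0 ≤ T₀ → ∀ c : ℝ,
      ((∫ t in (0:ℝ)..T₀, ((∑ i, ξ t i ^ 2) - ∑ i, (w t + D *ᵥ ξ t) i ^ 2)) ≤ c ↔
        (∫ t in (0:ℝ)..T₀,
          ((∑ i, (P *ᵥ ξ t - P⁻¹ *ᵥ (Dᵀ *ᵥ w t)) i ^ 2) -
            ∑ i, (Q⁻¹ *ᵥ w t) i ^ 2)) ≤ c)) :=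
  stmt5_general m D P hP hP2 Q hQ hQ2
end

section
/- With the data, Riccati equation solution X (additionally assumed positive semidefinite) and gain K = −G_τ⁻¹(B₂ᵀX + L_τᵀ) as in the dissipation inequality setup, suppose measurable functions x : [0,∞) → ℝⁿ (continuously differentiable), ξⱼ : [0,∞) → ℝ^{pⱼ} and ηᵢ : [0,∞) → ℝ^{rᵢ} (continuous) satisfy: the closed-loop dynamics ẋ(t) = A x(t) + Σⱼ B₁ⱼ ξⱼ(t) + Σᵢ B̌₂ᵢ ηᵢ(t) + B₂ u(t) with u(t) = K x(t) and x(0) = x₀; and the integral quadratic constraints: for every T₀ ≥ 0 and each j = 1,…,k, ∫₀^{T₀} ( ‖ξⱼ(t)‖² − ‖C₁ⱼ x(t) + D₁ⱼ u(t)‖² ) dt ≤ x₀ᵀ S₁ⱼ x₀, and for each i = 1,…,g, ∫₀^{T₀} ( ‖ηᵢ(t)‖² − ‖Č₂ᵢ x(t) + Ď₂ᵢ u(t)‖² ) dt ≤ x₀ᵀ S̃₂ᵢ x₀, where S₁ⱼ and S̃₂ᵢ are given positive definite matrices. Then for every T₀ ≥ 0, ∫₀^{T₀} ( x(t)ᵀ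 R x(t) + u(t)ᵀ G u(t) ) dt ≤ x₀ᵀ X x₀ + Σⱼ τⱼ x₀ᵀ S₁ⱼ x₀ + Σᵢ x₀ᵀ S̃₂ᵢ x₀; i.e., the cost functional J = ∫₀^{∞} (xᵀRx + uᵀGu) dt is bounded by V_τ = x₀ᵀ X x₀ + Σⱼ τⱼ x₀ᵀ S₁ⱼ x₀ + Σᵢ x₀ᵀ S̃₂ᵢ x₀. -/
/-!
The storage function `V(x) = xᵀXx` certifies the bound. Writing the Riccati equation through the
gain `K` (`AᵀX + XA + XW_τX + Q_τ = KᵀG_τK` and `G_τK = -(B₂ᵀX + L_τᵀ)`) and completing the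
square in each uncertainty channel (`2⟪y, Bξ⟫ ≤ τ‖ξ‖² + τ⁻¹‖Bᵀy‖²`) yields the pointwise
dissipation inequality
`xᵀRx + uᵀGu + V̇ ≤ Σⱼ τⱼ (‖ξⱼ‖² - ‖C₁ⱼx + D₁ⱼu‖²) + Σᵢ (‖ηᵢ‖² - ‖Č₂ᵢx + Ď₂ᵢu‖²)`.
Integrating over `[0, T₀]`, dropping `V(x(T₀)) ≥ 0` and bounding the right-hand side with the
IQCs gives the claim.
-/

open Matrix MeasureTheory

section QuadraticForms

variable {l m n : Type*} [Fintype l] [Fintype m] [Fintype n]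

lemma dotProduct_transpose_mul_mulVec (C : Matrix l m ℝ) (D : Matrix l n ℝ)
    (v : m → ℝ) (w : n → ℝ) : v ⬝ᵥ ((Cᵀ * D) *ᵥ w) = (C *ᵥ v) ⬝ᵥ (D *ᵥ w) := by
  rw [← mulVec_mulVec, dotProduct_transpose_mulVec, dotProduct_comm]

lemma two_mul_dotProduct_mulVec_le (B : Matrix m n ℝ) (y : m → ℝ) (ξ : n → ℝ) {τ : ℝ}
    (hτ : 0 < τ) :
    2 * (y ⬝ᵥ (B *ᵥ ξ)) ≤ τ * (ξ ⬝ᵥ ξ) + τ⁻¹ * (y ⬝ᵥ ((B * Bᵀ) *ᵥ y)) := by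
  set w := Bᵀ *ᵥ y
  have hyw : y ⬝ᵥ (B *ᵥ ξ) = ξ ⬝ᵥ w := by rw [dotProduct_transpose_mulVec]
  have hww : y ⬝ᵥ ((B * Bᵀ) *ᵥ y) = w ⬝ᵥ w := by
    rw [← transpose_transpose B, dotProduct_transpose_mul_mulVec,
      transpose_transpose]
  have hsq : 0 ≤ (τ • ξ - w) ⬝ᵥ (τ • ξ - w) := by
    simpa using dotProduct_self_star_nonneg (τ • ξ - w)
  rw [hyw, hww]
  simp only [sub_dotProduct, dotProduct_sub, smul_dotProduct, dotProduct_smul, smul_eq_mul,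
    dotProduct_comm w ξ] at hsq
  field_simp
  nlinarith

lemma add_mulVec_dotProduct_self (C : Matrix l m ℝ) (D : Matrix l n ℝ) (v : m → ℝ) (w : n → ℝ) :
    (C *ᵥ v + D *ᵥ w) ⬝ᵥ (C *ᵥ v + D *ᵥ w) =
      v ⬝ᵥ ((Cᵀ * C) *ᵥ v) + 2 * (v ⬝ᵥ ((Cᵀ * D) *ᵥ w)) + w ⬝ᵥ ((Dᵀ * D) *ᵥ w) := by
  simp only [dotProduct_transpose_mul_mulVec, add_dotProduct, dotProduct_add,
    dotProduct_comm (D *ᵥ w) (C *ᵥ v)]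
  ring

lemma dotProduct_mulVec_eq_of_transpose_eq {X : Matrix n n ℝ} (hXT : Xᵀ = X) (v w : n → ℝ) :
    v ⬝ᵥ (X *ᵥ w) = (X *ᵥ v) ⬝ᵥ w := by
  rw [← hXT, dotProduct_transpose_mulVec, hXT, dotProduct_comm]

end QuadraticForms

section Riccati

variable {m n : Type*} [Fintype m] [Fintype n]
  {A X Q W : Matrix n n ℝ} {B L : Matrix n m ℝ} {G : Matrix m m ℝ} {K : Matrix m n ℝ}

lemma mul_gain_eq [DecidableEq m] (hdet : IsUnit G.det) (hK : K = -(G⁻¹ * (Bᵀ * X + Lᵀ))) :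
    G * K = -(Bᵀ * X + Lᵀ) := by
  rw [hK, Matrix.mul_neg, mul_nonsing_inv_cancel_left _ _ hdet]

lemma riccati_eq_transpose_mul_mul_gain [DecidableEq m] (hXT : Xᵀ = X) (hGT : Gᵀ = G)
    (hdet : IsUnit G.det)
    (hRic : (A - B * G⁻¹ * Lᵀ)ᵀ * X + X * (A - B * G⁻¹ * Lᵀ) +
      X * (W - B * G⁻¹ * Bᵀ) * X + Q - L * G⁻¹ * Lᵀ = 0)
    (hK : K = -(G⁻¹ * (Bᵀ * X + Lᵀ))) :
    Aᵀ * X + X * A + X * W * X + Q = Kᵀ * G * K := by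
  have hGinvT : (G⁻¹)ᵀ = G⁻¹ := by rw [transpose_nonsing_inv, hGT]
  rw [Matrix.mul_assoc Kᵀ, mul_gain_eq hdet hK, hK]
  simp only [transpose_sub, transpose_mul, transpose_neg, transpose_add, transpose_transpose,
    hGinvT, hXT, Matrix.sub_mul, Matrix.mul_sub, Matrix.add_mul, Matrix.mul_add,
    Matrix.neg_mul, Matrix.mul_neg, Matrix.mul_assoc] at hRic ⊢
  rw [← sub_eq_zero, ← hRic]
  abel

-- The Hamiltonian of the τ-augmented LQ problem vanishes along the feedback `u = K v`.
lemma riccati_dotProduct_eq_zero (hXT : Xᵀ = X) (hgain : G * K = -(Bᵀ * X + Lᵀ))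
    (hric : Aᵀ * X + X * A + X * W * X + Q = Kᵀ * G * K) (v : n → ℝ) :
    v ⬝ᵥ (Q *ᵥ v) + 2 * (v ⬝ᵥ (L *ᵥ (K *ᵥ v))) + (K *ᵥ v) ⬝ᵥ (G *ᵥ (K *ᵥ v))
      + 2 * ((X *ᵥ v) ⬝ᵥ (A *ᵥ v + B *ᵥ (K *ᵥ v))) + (X *ᵥ v) ⬝ᵥ (W *ᵥ (X *ᵥ v)) = 0 := by
  set u := K *ᵥ v
  have hGu : u ⬝ᵥ (G *ᵥ u) = -((X *ᵥ v) ⬝ᵥ (B *ᵥ u) + v ⬝ᵥ (L *ᵥ u)) := by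
    rw [mulVec_mulVec, hgain, neg_mulVec, add_mulVec, ← mulVec_mulVec, dotProduct_neg,
      dotProduct_add, dotProduct_transpose_mulVec, dotProduct_transpose_mulVec]
  have hform := congrArg (fun M => v ⬝ᵥ (M *ᵥ v)) hric
  simp only [add_mulVec, dotProduct_add, ← mulVec_mulVec, dotProduct_transpose_mulVec,
    dotProduct_mulVec_eq_of_transpose_eq hXT v] at hform
  rw [dotProduct_comm (G *ᵥ u), hGu] at hform
  rw [dotProduct_add]
  linarith

end Riccati

section Dissipation

variable {n m : ℕ} {ι κ : Type*} [Fintype ι] [Fintype κ] {p q : ι → ℕ} {r s : κ → ℕ}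
  {A X Qτ Wτ R : Matrix (Fin n) (Fin n) ℝ} {B₂ Lτ : Matrix (Fin n) (Fin m) ℝ}
  {G Gτ : Matrix (Fin m) (Fin m) ℝ} {K : Matrix (Fin m) (Fin n) ℝ} {τ : ι → ℝ}
  {B₁ : ∀ j, Matrix (Fin n) (Fin (p j)) ℝ} {C₁ : ∀ j, Matrix (Fin (q j)) (Fin n) ℝ}
  {D₁ : ∀ j, Matrix (Fin (q j)) (Fin m) ℝ} {B₂' : ∀ i, Matrix (Fin n) (Fin (r i)) ℝ}
  {C₂ : ∀ i, Matrix (Fin (s i)) (Fin n) ℝ} {D₂ : ∀ i, Matrix (Fin (s i)) (Fin m) ℝ}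

lemma augmented_cost_eq
    (hGτ : Gτ = G + (∑ j, τ j • ((D₁ j)ᵀ * D₁ j)) + ∑ i, (D₂ i)ᵀ * D₂ i)
    (hQτ : Qτ = R + (∑ j, τ j • ((C₁ j)ᵀ * C₁ j)) + ∑ i, (C₂ i)ᵀ * C₂ i)
    (hLτ : Lτ = (∑ j, τ j • ((C₁ j)ᵀ * D₁ j)) + ∑ i, (C₂ i)ᵀ * D₂ i)
    (v : Fin n → ℝ) (u : Fin m → ℝ) :
    v ⬝ᵥ (Qτ *ᵥ v) + 2 * (v ⬝ᵥ (Lτ *ᵥ u)) + u ⬝ᵥ (Gτ *ᵥ u) =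
      v ⬝ᵥ (R *ᵥ v) + u ⬝ᵥ (G *ᵥ u)
        + (∑ j, τ j * ((C₁ j *ᵥ v + D₁ j *ᵥ u) ⬝ᵥ (C₁ j *ᵥ v + D₁ j *ᵥ u)))
        + ∑ i, (C₂ i *ᵥ v + D₂ i *ᵥ u) ⬝ᵥ (C₂ i *ᵥ v + D₂ i *ᵥ u) := by
  subst hGτ hQτ hLτ
  simp only [add_mulVec_dotProduct_self]
  simp only [add_mulVec, dotProduct_add, sum_mulVec, dotProduct_sum, smul_mulVec,
    dotProduct_smul, smul_eq_mul, mul_add, Finset.sum_add_distrib, Finset.mul_sum,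
    mul_left_comm _ (2 : ℝ)]
  ring

lemma dissipation_le (hτ : ∀ j, 0 < τ j)
    (hGτ : Gτ = G + (∑ j, τ j • ((D₁ j)ᵀ * D₁ j)) + ∑ i, (D₂ i)ᵀ * D₂ i)
    (hQτ : Qτ = R + (∑ j, τ j • ((C₁ j)ᵀ * C₁ j)) + ∑ i, (C₂ i)ᵀ * C₂ i)
    (hLτ : Lτ = (∑ j, τ j • ((C₁ j)ᵀ * D₁ j)) + ∑ i, (C₂ i)ᵀ * D₂ i)
    (hWτ : Wτ = (∑ j, (τ j)⁻¹ • (B₁ j * (B₁ j)ᵀ)) + ∑ i, B₂' i * (B₂' i)ᵀ)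
    (hXT : Xᵀ = X) (hgain : Gτ * K = -(B₂ᵀ * X + Lτᵀ))
    (hric : Aᵀ * X + X * A + X * Wτ * X + Qτ = Kᵀ * Gτ * K)
    (v : Fin n → ℝ) (ξ : ∀ j, Fin (p j) → ℝ) (η : ∀ i, Fin (r i) → ℝ)
    (u : Fin m → ℝ) (hu : u = K *ᵥ v) :
    v ⬝ᵥ (R *ᵥ v) + u ⬝ᵥ (G *ᵥ u)
        + 2 * ((X *ᵥ v) ⬝ᵥ (A *ᵥ v + (∑ j, B₁ j *ᵥ ξ j) + (∑ i, B₂' i *ᵥ η i) + B₂ *ᵥ u)) ≤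
      (∑ j, τ j * (ξ j ⬝ᵥ ξ j - (C₁ j *ᵥ v + D₁ j *ᵥ u) ⬝ᵥ (C₁ j *ᵥ v + D₁ j *ᵥ u)))
        + ∑ i, (η i ⬝ᵥ η i - (C₂ i *ᵥ v + D₂ i *ᵥ u) ⬝ᵥ (C₂ i *ᵥ v + D₂ i *ᵥ u)) := by
  set y := X *ᵥ v
  have hzero := riccati_dotProduct_eq_zero hXT hgain hric v
  rw [← hu, augmented_cost_eq hGτ hQτ hLτ] at hzero
  have hW : y ⬝ᵥ (Wτ *ᵥ y) = (∑ j, (τ j)⁻¹ * (y ⬝ᵥ ((B₁ j * (B₁ j)ᵀ) *ᵥ y)))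
      + ∑ i, y ⬝ᵥ ((B₂' i * (B₂' i)ᵀ) *ᵥ y) := by
    simp only [hWτ, add_mulVec, dotProduct_add, sum_mulVec, dotProduct_sum, smul_mulVec,
      dotProduct_smul, smul_eq_mul]
  have hyoung₁ : 2 * ∑ j, y ⬝ᵥ (B₁ j *ᵥ ξ j) ≤
      (∑ j, τ j * (ξ j ⬝ᵥ ξ j)) + ∑ j, (τ j)⁻¹ * (y ⬝ᵥ ((B₁ j * (B₁ j)ᵀ) *ᵥ y)) := by
    rw [Finset.mul_sum, ← Finset.sum_add_distrib]
    exact Finset.sum_le_sum fun j _ => two_mul_dotProduct_mulVec_le _ _ _ (hτ j)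
  have hyoung₂ : 2 * ∑ i, y ⬝ᵥ (B₂' i *ᵥ η i) ≤
      (∑ i, η i ⬝ᵥ η i) + ∑ i, y ⬝ᵥ ((B₂' i * (B₂' i)ᵀ) *ᵥ y) := by
    rw [Finset.mul_sum, ← Finset.sum_add_distrib]
    exact Finset.sum_le_sum fun i _ => by
      simpa using two_mul_dotProduct_mulVec_le (B₂' i) y (η i) one_pos
  simp only [dotProduct_add, dotProduct_sum, mul_sub, Finset.sum_sub_distrib] at hzero ⊢
  linarith

end Dissipation

lemma hasDerivAt_dotProduct_mulVec_self {n : Type*} [Fintype n] {X : Matrix n n ℝ}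
    (hXT : Xᵀ = X) {x : ℝ → n → ℝ} {f : n → ℝ} {t : ℝ} (hx : HasDerivAt x f t) :
    HasDerivAt (fun s => x s ⬝ᵥ (X *ᵥ x s)) (2 * ((X *ᵥ x t) ⬝ᵥ f)) t := by
  have hXx : HasDerivAt (fun s => X *ᵥ x s) (X *ᵥ f) t :=
    (LinearMap.toContinuousLinearMap (Matrix.mulVecLin X)).hasFDerivAt.comp_hasDerivAt t hx
  have hsum : HasDerivAt (fun s => ∑ i, x s i * (X *ᵥ x s) i)
      (∑ i, (f i * (X *ᵥ x t) i + x t i * (X *ᵥ f) i)) t :=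
    HasDerivAt.fun_sum fun i _ => (hasDerivAt_pi.1 hx i).mul (hasDerivAt_pi.1 hXx i)
  refine hsum.congr_deriv ?_
  rw [Finset.sum_add_distrib]
  change f ⬝ᵥ (X *ᵥ x t) + x t ⬝ᵥ (X *ᵥ f) = _
  rw [dotProduct_mulVec_eq_of_transpose_eq hXT (x t), dotProduct_comm f]
  ring

lemma integral_le_of_hasDerivAt_add_le {cost supply V V' : ℝ → ℝ} {T : ℝ} (hT : 0 ≤ T)
    (hV : ∀ t ∈ Set.Icc 0 T, HasDerivAt V (V' t) t)
    (hcost : IntervalIntegrable cost volume 0 T) (hV' : IntervalIntegrable V' volume 0 T)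
    (hsupply : IntervalIntegrable supply volume 0 T)
    (hdiss : ∀ t ∈ Set.Icc 0 T, cost t + V' t ≤ supply t) (hVT : 0 ≤ V T) :
    ∫ t in 0..T, cost t ≤ V 0 + ∫ t in 0..T, supply t := by
  have hFTC : ∫ t in 0..T, V' t = V T - V 0 :=
    intervalIntegral.integral_eq_sub_of_hasDerivAt (by rwa [Set.uIcc_of_le hT]) hV'
  have hmono := intervalIntegral.integral_mono_on hT (hcost.add hV') hsupply hdiss
  rw [intervalIntegral.integral_add hcost hV', hFTC] at hmono
  linarith

lemma integral_weighted_sum_le {ι κ : Type*} [Fintype ι] [Fintype κ] {T : ℝ}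
    {τ : ι → ℝ} (hτ : ∀ j, 0 ≤ τ j) {a : ι → ℝ → ℝ} {b : κ → ℝ → ℝ}
    (ha : ∀ j, IntervalIntegrable (a j) volume 0 T) (hb : ∀ i, IntervalIntegrable (b i) volume 0 T)
    {α : ι → ℝ} {β : κ → ℝ} (hα : ∀ j, ∫ t in 0..T, a j t ≤ α j)
    (hβ : ∀ i, ∫ t in 0..T, b i t ≤ β i) :
    ∫ t in 0..T, ((∑ j, τ j * a j t) + ∑ i, b i t) ≤ (∑ j, τ j * α j) + ∑ i, β i := by
  have ha' : ∀ j ∈ Finset.univ, IntervalIntegrable (fun t => τ j * a j t) volume 0 T :=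
    fun j _ => (ha j).const_mul (τ j)
  have hb' : ∀ i ∈ Finset.univ, IntervalIntegrable (b i) volume 0 T := fun i _ => hb i
  rw [intervalIntegral.integral_add
      (by simpa only [Finset.sum_fn] using IntervalIntegrable.sum _ ha')
      (by simpa only [Finset.sum_fn] using IntervalIntegrable.sum _ hb'),
    intervalIntegral.integral_finsetSum ha', intervalIntegral.integral_finsetSum hb']
  simp only [intervalIntegral.integral_const_mul]
  exact add_le_add (Finset.sum_le_sum fun j _ => mul_le_mul_of_nonneg_left (hα j) (hτ j))
    (Finset.sum_le_sum fun i _ => hβ i)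

lemma integral_le_of_dissipation {ι κ : Type*} [Fintype ι] [Fintype κ] {T : ℝ} (hT : 0 ≤ T)
    {cost V V' : ℝ → ℝ} {τ : ι → ℝ} (hτ : ∀ j, 0 ≤ τ j) {a : ι → ℝ → ℝ} {b : κ → ℝ → ℝ}
    {α : ι → ℝ} {β : κ → ℝ} (hα : ∀ j, ∫ t in 0..T, a j t ≤ α j)
    (hβ : ∀ i, ∫ t in 0..T, b i t ≤ β i)
    (hV : ∀ t ∈ Set.Icc 0 T, HasDerivAt V (V' t) t)
    (hdiss : ∀ t ∈ Set.Icc 0 T, cost t + V' t ≤ (∑ j, τ j * a j t) + ∑ i, b i t)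
    (hVT : 0 ≤ V T) (hcost : IntervalIntegrable cost volume 0 T)
    (hV' : IntervalIntegrable V' volume 0 T) (ha : ∀ j, IntervalIntegrable (a j) volume 0 T)
    (hb : ∀ i, IntervalIntegrable (b i) volume 0 T) :
    ∫ t in 0..T, cost t ≤ V 0 + (∑ j, τ j * α j) + ∑ i, β i := by
  have hsupply : IntervalIntegrable (fun t => (∑ j, τ j * a j t) + ∑ i, b i t) volume 0 T := by
    simpa only [Finset.sum_fn] using (IntervalIntegrable.sum _ fun j _ =>
      (ha j).const_mul (τ j)).add (IntervalIntegrable.sum _ fun i _ => hb i)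
  rw [add_assoc]
  exact (integral_le_of_hasDerivAt_add_le hT hV hcost hV' hsupply hdiss hVT).trans
    (add_le_add le_rfl (integral_weighted_sum_le hτ ha hb hα hβ))

theorem stmt9_general (n m k g : ℕ) (p q : Fin k → ℕ) (r s : Fin g → ℕ)
    (A : Matrix (Fin n) (Fin n) ℝ) (B₂ : Matrix (Fin n) (Fin m) ℝ)
    (B₁ : ∀ j : Fin k, Matrix (Fin n) (Fin (p j)) ℝ)
    (C₁ : ∀ j : Fin k, Matrix (Fin (q j)) (Fin n) ℝ)
    (D₁ : ∀ j : Fin k, Matrix (Fin (q j)) (Fin m) ℝ)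
    (B₂' : ∀ i : Fin g, Matrix (Fin n) (Fin (r i)) ℝ)
    (C₂ : ∀ i : Fin g, Matrix (Fin (s i)) (Fin n) ℝ)
    (D₂ : ∀ i : Fin g, Matrix (Fin (s i)) (Fin m) ℝ)
    (R : Matrix (Fin n) (Fin n) ℝ)
    (G : Matrix (Fin m) (Fin m) ℝ) (hG : G.PosDef)
    (τ : Fin k → ℝ) (hτ : ∀ j, 0 < τ j)
    (Gτ : Matrix (Fin m) (Fin m) ℝ)
    (hGτ : Gτ = G + (∑ j, τ j • ((D₁ j)ᵀ * D₁ j)) + ∑ i, (D₂ i)ᵀ * D₂ i)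
    (Qτ : Matrix (Fin n) (Fin n) ℝ)
    (hQτ : Qτ = R + (∑ j, τ j • ((C₁ j)ᵀ * C₁ j)) + ∑ i, (C₂ i)ᵀ * C₂ i)
    (Lτ : Matrix (Fin n) (Fin m) ℝ)
    (hLτ : Lτ = (∑ j, τ j • ((C₁ j)ᵀ * D₁ j)) + ∑ i, (C₂ i)ᵀ * D₂ i)
    (Wτ : Matrix (Fin n) (Fin n) ℝ)
    (hWτ : Wτ = (∑ j, (τ j)⁻¹ • (B₁ j * (B₁ j)ᵀ)) + ∑ i, B₂' i * (B₂' i)ᵀ)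
    (X : Matrix (Fin n) (Fin n) ℝ) (hXsymm : X.IsSymm) (hXpsd : X.PosSemidef)
    (hRic : (A - B₂ * Gτ⁻¹ * Lτᵀ)ᵀ * X + X * (A - B₂ * Gτ⁻¹ * Lτᵀ) +
      X * (Wτ - B₂ * Gτ⁻¹ * B₂ᵀ) * X + Qτ - Lτ * Gτ⁻¹ * Lτᵀ = 0)
    (K : Matrix (Fin m) (Fin n) ℝ) (hK : K = -(Gτ⁻¹ * (B₂ᵀ * X + Lτᵀ)))
    -- closed-loop trajectory
    (x : ℝ → Fin n → ℝ) (ξ : ∀ j : Fin k, ℝ → Fin (p j) → ℝ)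
    (η : ∀ i : Fin g, ℝ → Fin (r i) → ℝ)
    (u : ℝ → Fin m → ℝ) (hu : ∀ t, u t = K *ᵥ x t)
    (x₀ : Fin n → ℝ) (hx0 : x 0 = x₀)
    (hdyn : ∀ t, 0 ≤ t → HasDerivAt x
      (A *ᵥ x t + (∑ j, B₁ j *ᵥ ξ j t) + (∑ i, B₂' i *ᵥ η i t) + B₂ *ᵥ u t) t)
    (hξc : ∀ j, ContinuousOn (ξ j) (Set.Ici (0:ℝ)))
    (hηc : ∀ i, ContinuousOn (η i) (Set.Ici (0:ℝ)))
    -- integral quadratic constraints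
    (S₁ : ∀ _ : Fin k, Matrix (Fin n) (Fin n) ℝ)
    (S₂ : ∀ _ : Fin g, Matrix (Fin n) (Fin n) ℝ)
    (hIQC1 : ∀ T₀, 0 ≤ T₀ → ∀ j,
      (∫ t in (0:ℝ)..T₀,
        ((∑ a, ξ j t a ^ 2) - ∑ a, ((C₁ j *ᵥ x t + D₁ j *ᵥ u t) a) ^ 2)) ≤
          x₀ ⬝ᵥ (S₁ j *ᵥ x₀))
    (hIQC2 : ∀ T₀, 0 ≤ T₀ → ∀ i,
      (∫ t in (0:ℝ)..T₀,
        ((∑ a, η i t a ^ 2) - ∑ a, ((C₂ i *ᵥ x t + D₂ i *ᵥ u t) a) ^ 2)) ≤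
          x₀ ⬝ᵥ (S₂ i *ᵥ x₀)) :
    -- guaranteed cost bound
    ∀ T₀, 0 ≤ T₀ →
      (∫ t in (0:ℝ)..T₀, (x t ⬝ᵥ (R *ᵥ x t) + u t ⬝ᵥ (G *ᵥ u t))) ≤
        x₀ ⬝ᵥ (X *ᵥ x₀) + (∑ j, τ j * (x₀ ⬝ᵥ (S₁ j *ᵥ x₀))) +
          ∑ i, x₀ ⬝ᵥ (S₂ i *ᵥ x₀) := by
  intro T hT
  have hGτpd : Gτ.PosDef := by
    rw [hGτ]
    exact (hG.add_posSemidef (posSemidef_sum _ fun j _ =>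
      (posSemidef_conjTranspose_mul_self (D₁ j)).smul (hτ j).le)).add_posSemidef
      (posSemidef_sum _ fun i _ => posSemidef_conjTranspose_mul_self (D₂ i))
  have hdet : IsUnit Gτ.det := (isUnit_iff_isUnit_det Gτ).mp hGτpd.isUnit
  have hGT : Gτᵀ = Gτ := isHermitian_iff_isSymm.mp hGτpd.isHermitian
  have hgain := mul_gain_eq hdet hK
  have hric := riccati_eq_transpose_mul_mul_gain hXsymm hGT hdet hRic hK
  obtain rfl : u = fun t => K *ᵥ x t := funext hu
  have hx : ContinuousOn x (Set.Icc 0 T) := fun t ht =>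
    (hdyn t ht.1).continuousAt.continuousWithinAt
  have hξ : ∀ j, ContinuousOn (ξ j) (Set.Icc 0 T) := fun j => (hξc j).mono Set.Icc_subset_Ici_self
  have hη : ∀ i, ContinuousOn (η i) (Set.Icc 0 T) := fun i => (hηc i).mono Set.Icc_subset_Ici_self
  have hsq : ∀ {d : ℕ} (w : Fin d → ℝ), ∑ a, w a ^ 2 = w ⬝ᵥ w := fun w => by
    simp [dotProduct, sq]
  simp only [hsq] at hIQC1 hIQC2
  subst hx0
  refine integral_le_of_dissipation hT (fun j => (hτ j).le) (hIQC1 T hT) (hIQC2 T hT)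
    (fun t ht => hasDerivAt_dotProduct_mulVec_self hXsymm (hdyn t ht.1))
    (fun t _ => dissipation_le hτ hGτ hQτ hLτ hWτ hXsymm hgain hric _ _ _ _ rfl)
    (hXpsd.dotProduct_mulVec_nonneg _) ?_ ?_ (fun j => ?_) (fun i => ?_)
  all_goals exact ContinuousOn.intervalIntegrable_of_Icc hT (by fun_prop)

/-- Guaranteed cost bound for the minimax LQR state feedback controller
(part (i) of the paper's main theorem): along any closed-loop trajectory with `u = Kx`,
if the uncertainty signals satisfy the normalized IQCs, then for every horizon `T₀ ≥ 0`
the cost satisfies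
`∫₀^{T₀}(xᵀRx + uᵀGu) dt ≤ x₀ᵀXx₀ + Σⱼ τⱼ x₀ᵀS₁ⱼx₀ + Σᵢ x₀ᵀS̃₂ᵢx₀`
(Euclidean norms written as sums of squares). -/
theorem stmt9 (n m k g : ℕ) (p q : Fin k → ℕ) (r s : Fin g → ℕ)
    (A : Matrix (Fin n) (Fin n) ℝ) (B₂ : Matrix (Fin n) (Fin m) ℝ)
    (B₁ : ∀ j : Fin k, Matrix (Fin n) (Fin (p j)) ℝ)
    (C₁ : ∀ j : Fin k, Matrix (Fin (q j)) (Fin n) ℝ)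
    (D₁ : ∀ j : Fin k, Matrix (Fin (q j)) (Fin m) ℝ)
    (B₂' : ∀ i : Fin g, Matrix (Fin n) (Fin (r i)) ℝ)
    (C₂ : ∀ i : Fin g, Matrix (Fin (s i)) (Fin n) ℝ)
    (D₂ : ∀ i : Fin g, Matrix (Fin (s i)) (Fin m) ℝ)
    (R : Matrix (Fin n) (Fin n) ℝ) (hR : R.PosDef)
    (G : Matrix (Fin m) (Fin m) ℝ) (hG : G.PosDef)
    (τ : Fin k → ℝ) (hτ : ∀ j, 0 < τ j)
    (Gτ : Matrix (Fin m) (Fin m) ℝ)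
    (hGτ : Gτ = G + (∑ j, τ j • ((D₁ j)ᵀ * D₁ j)) + ∑ i, (D₂ i)ᵀ * D₂ i)
    (Qτ : Matrix (Fin n) (Fin n) ℝ)
    (hQτ : Qτ = R + (∑ j, τ j • ((C₁ j)ᵀ * C₁ j)) + ∑ i, (C₂ i)ᵀ * C₂ i)
    (Lτ : Matrix (Fin n) (Fin m) ℝ)
    (hLτ : Lτ = (∑ j, τ j • ((C₁ j)ᵀ * D₁ j)) + ∑ i, (C₂ i)ᵀ * D₂ i)
    (Wτ : Matrix (Fin n) (Fin n) ℝ)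
    (hWτ : Wτ = (∑ j, (τ j)⁻¹ • (B₁ j * (B₁ j)ᵀ)) + ∑ i, B₂' i * (B₂' i)ᵀ)
    (X : Matrix (Fin n) (Fin n) ℝ) (hXsymm : X.IsSymm) (hXpsd : X.PosSemidef)
    (hRic : (A - B₂ * Gτ⁻¹ * Lτᵀ)ᵀ * X + X * (A - B₂ * Gτ⁻¹ * Lτᵀ) +
      X * (Wτ - B₂ * Gτ⁻¹ * B₂ᵀ) * X + Qτ - Lτ * Gτ⁻¹ * Lτᵀ = 0)
    (K : Matrix (Fin m) (Fin n) ℝ) (hK : K = -(Gτ⁻¹ * (B₂ᵀ * X + Lτᵀ)))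
    -- closed-loop trajectory
    (x : ℝ → Fin n → ℝ) (ξ : ∀ j : Fin k, ℝ → Fin (p j) → ℝ)
    (η : ∀ i : Fin g, ℝ → Fin (r i) → ℝ)
    (u : ℝ → Fin m → ℝ) (hu : ∀ t, u t = K *ᵥ x t)
    (x₀ : Fin n → ℝ) (hx0 : x 0 = x₀)
    (hdyn : ∀ t, 0 ≤ t → HasDerivAt x
      (A *ᵥ x t + (∑ j, B₁ j *ᵥ ξ j t) + (∑ i, B₂' i *ᵥ η i t) + B₂ *ᵥ u t) t)
    (hξc : ∀ j, ContinuousOn (ξ j) (Set.Ici (0:ℝ)))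
    (hηc : ∀ i, ContinuousOn (η i) (Set.Ici (0:ℝ)))
    -- integral quadratic constraints
    (S₁ : ∀ _ : Fin k, Matrix (Fin n) (Fin n) ℝ) (hS₁ : ∀ j, (S₁ j).PosDef)
    (S₂ : ∀ _ : Fin g, Matrix (Fin n) (Fin n) ℝ) (hS₂ : ∀ i, (S₂ i).PosDef)
    (hIQC1 : ∀ T₀, 0 ≤ T₀ → ∀ j,
      (∫ t in (0:ℝ)..T₀,
        ((∑ a, ξ j t a ^ 2) - ∑ a, ((C₁ j *ᵥ x t + D₁ j *ᵥ u t) a) ^ 2)) ≤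
          x₀ ⬝ᵥ (S₁ j *ᵥ x₀))
    (hIQC2 : ∀ T₀, 0 ≤ T₀ → ∀ i,
      (∫ t in (0:ℝ)..T₀,
        ((∑ a, η i t a ^ 2) - ∑ a, ((C₂ i *ᵥ x t + D₂ i *ᵥ u t) a) ^ 2)) ≤
          x₀ ⬝ᵥ (S₂ i *ᵥ x₀)) :
    -- guaranteed cost bound
    ∀ T₀, 0 ≤ T₀ →
      (∫ t in (0:ℝ)..T₀, (x t ⬝ᵥ (R *ᵥ x t) + u t ⬝ᵥ (G *ᵥ u t))) ≤
        x₀ ⬝ᵥ (X *ᵥ x₀) + (∑ j, τ j * (x₀ ⬝ᵥ (S₁ j *ᵥ x₀))) +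
          ∑ i, x₀ ⬝ᵥ (S₂ i *ᵥ x₀) :=
  stmt9_general n m k g p q r s A B₂ B₁ C₁ D₁ B₂' C₂ D₂ R G hG τ hτ Gτ hGτ Qτ hQτ Lτ hLτ Wτ hWτ X
    hXsymm hXpsd hRic K hK x ξ η u hu x₀ hx0 hdyn hξc hηc S₁ S₂ hIQC1 hIQC2
end
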